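/- arXiv:1401.5551 — 4 statements merged into one kernel-verified Lean document; each statement's English description precedes it below -/
import Mathlib

section
/- Let Ω be a standard Borel space with probability measure μ and let X₁, X₂, X₃ : Ω → ℝ be measurable random variables such that X₁ and X₃ are conditionally independent given the σ-algebra generated by X₂. Then the conditional distribution of X₃ given the pair (X₁, X₂) agrees almost surely with the conditional distribution of X₃ given X₂ alone: for μ-almost every ω, condDistrib X₃ (fun ω => (X₁ ω, X₂ ω)) μ evaluated at (X₁ ω, X₂ ω) equals condDistrib X₃ X₂ μ evaluated at X₂ ω (as measures on ℝ). -/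
/-!
Conditional independence `X₁ ⫫ X₃ | X₂` is equivalent to
`condDistrib X₃ (X₂, X₁) μ = (condDistrib X₃ X₂ μ).prodMkRight ℝ` almost everywhere
(`condIndepFun_iff_condDistrib_prod_ae_eq_prodMkRight`). The theorem is this identity
transported along the swap `(x₂, x₁) ↦ (x₁, x₂)`: relabelling the conditioning variable by a
measurable equivalence `e` precomposes its conditional distribution with `e.symm`.
-/

open MeasureTheory ProbabilityTheory

namespace MeasureTheory.Measure

lemma map_prodMap_compProd_comap {α β γ : Type*} {mα : MeasurableSpace α} {mβ : MeasurableSpace β}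
    {mγ : MeasurableSpace γ} (ν : Measure α) [IsFiniteMeasure ν] (κ : Kernel β γ)
    [IsFiniteKernel κ] {f : α → β} (hf : Measurable f) :
    (ν ⊗ₘ κ.comap f hf).map (Prod.map f id) = ν.map f ⊗ₘ κ := by
  refine ext_prod fun {s t} hs ht ↦ ?_
  rw [map_apply (hf.prodMap measurable_id) (hs.prod ht), Set.preimage_prod_map_prod,
    Set.preimage_id, compProd_apply_prod (hf hs) ht, compProd_apply_prod hs ht,
    setLIntegral_map hs (κ.measurable_coe ht) hf]
  rfl

end MeasureTheory.Measure

namespace ProbabilityTheory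

variable {α β γ Ω : Type*} {mα : MeasurableSpace α} {mβ : MeasurableSpace β}
  {mγ : MeasurableSpace γ} {mΩ : MeasurableSpace Ω} [StandardBorelSpace Ω] [Nonempty Ω]
  {μ : Measure α} [IsFiniteMeasure μ] {X : α → β} {Y : α → Ω}

lemma condDistrib_comp_measurableEquiv (e : β ≃ᵐ γ) (hX : AEMeasurable X μ)
    (hY : AEMeasurable Y μ) :
    condDistrib Y (e ∘ X) μ =ᵐ[μ.map (e ∘ X)]
      (condDistrib Y X μ).comap e.symm e.symm.measurable := by
  refine condDistrib_ae_eq_of_measure_eq_compProd _ hY ?_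
  have h_comap_comap : ((condDistrib Y X μ).comap e.symm e.symm.measurable).comap e e.measurable =
      condDistrib Y X μ := by
    ext1 b
    simp [Kernel.comap_apply]
  rw [← AEMeasurable.map_map_of_aemeasurable e.measurable.aemeasurable hX,
    ← Measure.map_prodMap_compProd_comap _ _ e.measurable, h_comap_comap,
    compProd_map_condDistrib hY,
    AEMeasurable.map_map_of_aemeasurable (by fun_prop) (hX.prodMk hY)]
  rfl

end ProbabilityTheory

theorem condDistrib_pair_ae_eq_condDistrib_of_condIndepFun_general
    {Ω : Type*} [mΩ : MeasurableSpace Ω] [StandardBorelSpace Ω]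
    (μ : Measure Ω) [IsProbabilityMeasure μ]
    (X₁ X₂ X₃ : Ω → ℝ) (h1 : Measurable X₁) (h2 : Measurable X₂) (h3 : Measurable X₃)
    (hm' : MeasurableSpace.comap X₂ (borel ℝ) ≤ mΩ)
    (hci : CondIndepFun (MeasurableSpace.comap X₂ (borel ℝ)) hm' X₁ X₃ μ) :
    ∀ᵐ ω ∂μ,
      condDistrib X₃ (fun ω' => (X₁ ω', X₂ ω')) μ (X₁ ω, X₂ ω) =
        condDistrib X₃ X₂ μ (X₂ ω) := by
  have h_swap := condDistrib_comp_measurableEquiv (μ := μ) (Y := X₃) MeasurableEquiv.prodComm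
    (h2.prodMk h1).aemeasurable h3.aemeasurable
  have h_markov := (condIndepFun_iff_condDistrib_prod_ae_eq_prodMkRight h3 h1 h2).mp hci
  filter_upwards [ae_of_ae_map (by fun_prop) h_swap, ae_of_ae_map (by fun_prop) h_markov]
    with ω h_swap_ω h_markov_ω
  exact h_swap_ω.trans h_markov_ω

/-- If `X₁ ⫫ X₃ | X₂` on a standard Borel probability space, then the conditional distribution
of `X₃` given the pair `(X₁, X₂)` agrees almost surely with the conditional distribution of `X₃`
given `X₂` alone. -/
theorem condDistrib_pair_ae_eq_condDistrib_of_condIndepFun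
    {Ω : Type*} [mΩ : MeasurableSpace Ω] [StandardBorelSpace Ω] [Nonempty Ω]
    (μ : Measure Ω) [IsProbabilityMeasure μ]
    (X₁ X₂ X₃ : Ω → ℝ) (h1 : Measurable X₁) (h2 : Measurable X₂) (h3 : Measurable X₃)
    (hm' : MeasurableSpace.comap X₂ (borel ℝ) ≤ mΩ)
    (hci : CondIndepFun (MeasurableSpace.comap X₂ (borel ℝ)) hm' X₁ X₃ μ) :
    ∀ᵐ ω ∂μ,
      condDistrib X₃ (fun ω' => (X₁ ω', X₂ ω')) μ (X₁ ω, X₂ ω) =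
        condDistrib X₃ X₂ μ (X₂ ω) :=
  condDistrib_pair_ae_eq_condDistrib_of_condIndepFun_general (mΩ := mΩ) μ X₁ X₂ X₃ h1 h2 h3 hm' hci
end

section
/- Let G be a topologically sorted DAG on n nodes. Then every matrix in loc(G) is the limit, in the standard topology on real n × n matrices, of a sequence of positive definite matrices in loc(G); that is, loc(G) ∩ {positive definite matrices} is dense in loc(G). -/
open Matrix

noncomputable section

/-- The parent set of a node `j` in the DAG with edge relation `E`. -/
def parents {n : ℕ} (E : Fin n → Fin n → Prop) [DecidableRel E] (j : Fin n) : Finset (Fin n) :=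
  Finset.univ.filter (fun i => E i j)

/-- The rank of the submatrix of `σ` with rows `A` and columns `B`. -/
def subRank {n : ℕ} (σ : Matrix (Fin n) (Fin n) ℝ) (A B : Finset (Fin n)) : ℕ :=
  (σ.submatrix (fun a : A => (a : Fin n)) (fun b : B => (b : Fin n))).rank

/-- `loc(G)`: positive semidefinite matrices satisfying the rank conditions of the local
Markov relations of the DAG `G`. -/
def locSet {n : ℕ} (E : Fin n → Fin n → Prop) [DecidableRel E] :
    Set (Matrix (Fin n) (Fin n) ℝ) :=
  {σ | σ.PosSemidef ∧ ∀ i j : Fin n, i < j → ¬ E i j →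
    subRank σ (insert i (parents E j)) (insert j (parents E j)) =
      subRank σ (parents E j) (parents E j)}

/-!
For positive semidefinite `σ`, the rank condition for a non-edge `i → j` says that the column
`σ_{·j}`, restricted to the rows `{i} ∪ pa(j)`, is a linear combination of the columns indexed by
`pa(j)`. As the kernel of `σ_{pa(j),pa(j)}` is that of `σ_{·,pa(j)}`, one set of coefficients
serves all `i < j`, so `σ ∈ loc(G)` iff `(σ Λ)_{ij} = σ_{ij}` for `i < j` and some `Λ`
supported on the edges of `G`. Such a `Λ` is strictly upper triangular, so `T = 1 - Λ` is
invertible and `C = T⁻ᵀ T⁻¹` is positive definite with `C T` lower triangular. Then `σ + ε C`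
is positive definite, satisfies the same relations, and tends to `σ` as `ε → 0`.
-/

section

variable {n : ℕ}

theorem subRank_eq_finrank_span (σ : Matrix (Fin n) (Fin n) ℝ) (A B : Finset (Fin n)) :
    subRank σ A B = Module.finrank ℝ (Submodule.span ℝ ((fun b (a : A) => σ a b) '' B)) := by
  rw [subRank, rank_eq_finrank_span_cols, Set.image_eq_range]
  rfl

theorem subRank_insert_eq_iff (σ : Matrix (Fin n) (Fin n) ℝ) (A K : Finset (Fin n)) (j : Fin n) :
    subRank σ A (insert j K) = subRank σ A K ↔
      ∃ x : Fin n → ℝ, (∀ k ∉ K, x k = 0) ∧ ∀ a ∈ A, (σ *ᵥ x) a = σ a j := by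
  set col : Fin n → A → ℝ := fun b a => σ a b
  calc subRank σ A (insert j K) = subRank σ A K ↔ col j ∈ Submodule.span ℝ (col '' K) := by
        rw [subRank_eq_finrank_span, subRank_eq_finrank_span, Finset.coe_insert,
          Set.image_insert_eq, Submodule.span_insert]
        constructor
        · intro h
          have := Submodule.eq_of_le_of_finrank_eq le_sup_right h.symm
          exact this ▸ Submodule.mem_sup_left (Submodule.mem_span_singleton_self _)
        · intro h
          rw [sup_eq_right.2 ((Submodule.span_singleton_le_iff_mem _ _).2 h)]
    _ ↔ _ := by
        rw [Finsupp.mem_span_image_iff_linearCombination]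
        constructor
        · rintro ⟨l, hl, hlj⟩
          refine ⟨l, fun k hk => Finsupp.notMem_support_iff.1 fun h => hk (hl h), fun a ha => ?_⟩
          have := congrFun hlj ⟨a, ha⟩
          simpa [col, Finsupp.linearCombination_apply, Finsupp.sum_fintype, mulVec, dotProduct,
            mul_comm] using this
        · rintro ⟨x, hx, hxj⟩
          refine ⟨Finsupp.equivFunOnFinite.symm x, fun k hk => ?_, ?_⟩
          · by_contra h; exact (Finsupp.mem_support_iff.1 hk) (hx k h)
          · ext a
            simpa [col, Finsupp.linearCombination_apply, Finsupp.sum_fintype, mulVec, dotProduct,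
              mul_comm] using hxj a a.2

open scoped MatrixOrder in
theorem Matrix.PosSemidef.subRank_eq_of_subset {σ : Matrix (Fin n) (Fin n) ℝ}
    (hσ : σ.PosSemidef) {A K : Finset (Fin n)} (hKA : K ⊆ A) :
    subRank σ A K = subRank σ K K := by
  obtain ⟨B, rfl⟩ := CStarAlgebra.nonneg_iff_eq_star_mul_self.mp hσ.nonneg
  rw [star_eq_conjTranspose]
  set BK := B.submatrix id ((↑) : K → Fin n)
  have hfac : ∀ A' : Finset (Fin n), (Bᴴ * B).submatrix ((↑) : A' → Fin n) ((↑) : K → Fin n) =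
      (B.submatrix id ((↑) : A' → Fin n))ᴴ * BK :=
    fun A' => by rw [submatrix_mul _ _ _ _ _ Function.bijective_id, conjTranspose_submatrix]
  refine le_antisymm ?_ ?_
  · calc subRank (Bᴴ * B) A K ≤ BK.rank := by
          rw [subRank, hfac]; exact rank_mul_le_right _ _
      _ = subRank (Bᴴ * B) K K := by rw [subRank, hfac, rank_conjTranspose_mul_self]
  · have hKK : (Bᴴ * B).submatrix ((↑) : K → Fin n) ((↑) : K → Fin n) =
        ((Bᴴ * B).submatrix ((↑) : A → Fin n) ((↑) : K → Fin n)).submatrix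
          (fun k : K => (⟨k, hKA k.2⟩ : A)) id := rfl
    rw [subRank, subRank, hKK]
    exact rank_submatrix_le _ _ _

theorem Matrix.IsSymm.subRank_comm {σ : Matrix (Fin n) (Fin n) ℝ} (hσ : σ.IsSymm)
    (A B : Finset (Fin n)) : subRank σ A B = subRank σ B A := by
  rw [subRank, subRank, ← rank_transpose, transpose_submatrix, hσ.eq]

theorem Matrix.PosSemidef.mulVec_eq_zero_of_eq_zero_on_support {ι : Type*} [Fintype ι]
    {σ : Matrix ι ι ℝ} (hσ : σ.PosSemidef) {x : ι → ℝ} (hx : ∀ k, x k ≠ 0 → (σ *ᵥ x) k = 0) :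
    σ *ᵥ x = 0 := by
  refine (hσ.dotProduct_mulVec_zero_iff x).1 (Finset.sum_eq_zero fun k _ => ?_)
  by_cases h : x k = 0
  · simp [h]
  · simp [hx k h]

theorem Matrix.exists_posDef_forall_lt_mul_apply_eq {ι : Type*} [Fintype ι] [LinearOrder ι]
    {Λ : Matrix ι ι ℝ} (hΛ : ∀ i j, j ≤ i → Λ i j = 0) :
    ∃ C : Matrix ι ι ℝ, C.PosDef ∧ ∀ i j, i < j → (C * Λ) i j = C i j := by
  set T := 1 - Λ
  have hT : T.IsUpperTriangular := fun i j (hji : j < i) => by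
    simp [T, one_apply_ne hji.ne', hΛ i j hji.le]
  have hdet : IsUnit T.det := by simp [det_of_isUpperTriangular hT, T, hΛ]
  have : Invertible T := T.invertibleOfIsUnitDet hdet
  refine ⟨(T⁻¹)ᴴ * T⁻¹, PosDef.conjTranspose_mul_self _ (mulVec_injective_of_isUnit ?_),
    fun i j hij => ?_⟩
  · exact isUnit_nonsing_inv_iff.2 ((isUnit_iff_isUnit_det T).2 hdet)
  · have hCT : (T⁻¹)ᴴ * T⁻¹ * T = (T⁻¹)ᴴ := by rw [mul_assoc, inv_mul_of_invertible, mul_one]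
    have h0 : ((T⁻¹)ᴴ * T⁻¹ * T) i j = 0 := by
      rw [hCT, conjTranspose_apply, blockTriangular_inv_of_blockTriangular hT hij, star_zero]
    rwa [mul_sub, mul_one, sub_apply, sub_eq_zero, eq_comm] at h0

variable {E : Fin n → Fin n → Prop} [DecidableRel E]

theorem mem_parents {j k : Fin n} : k ∈ parents E j ↔ E k j := by
  simp [parents]

theorem exists_regression_of_mem_locSet {σ : Matrix (Fin n) (Fin n) ℝ} (hσ : σ ∈ locSet E)
    (j : Fin n) : ∃ x : Fin n → ℝ, (∀ k, ¬ E k j → x k = 0) ∧ ∀ i < j, (σ *ᵥ x) i = σ i j := by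
  set K := parents E j
  obtain ⟨x, hxK, hx⟩ := (subRank_insert_eq_iff σ K K j).1 <| by
    rw [(isHermitian_iff_isSymm.1 hσ.1.isHermitian).subRank_comm,
      hσ.1.subRank_eq_of_subset (Finset.subset_insert j K)]
  refine ⟨x, fun k hk => hxK k (mt mem_parents.1 hk), fun i hij => ?_⟩
  by_cases hEij : E i j
  · exact hx i (mem_parents.2 hEij)
  obtain ⟨y, hyK, hy⟩ := (subRank_insert_eq_iff σ (insert i K) K j).1 <| by
    rw [hσ.2 i j hij hEij, hσ.1.subRank_eq_of_subset (Finset.subset_insert i K)]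
  have hker : σ *ᵥ (y - x) = 0 := hσ.1.mulVec_eq_zero_of_eq_zero_on_support fun k hk => by
    have hkK : k ∈ K := by
      by_contra h
      simp [hxK k h, hyK k h] at hk
    simp [mulVec_sub, hy k (Finset.mem_insert_of_mem hkK), hx k hkK]
  have hi := congrFun hker i
  rwa [mulVec_sub, Pi.sub_apply, Pi.zero_apply, sub_eq_zero,
    hy i (Finset.mem_insert_self i K), eq_comm] at hi

theorem mem_locSet_of_regression (hE : ∀ i j, E i j → i < j) {σ : Matrix (Fin n) (Fin n) ℝ}
    (hσ : σ.PosSemidef)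
    (hreg : ∀ j, ∃ x : Fin n → ℝ, (∀ k, ¬ E k j → x k = 0) ∧ ∀ i < j, (σ *ᵥ x) i = σ i j) :
    σ ∈ locSet E := by
  refine ⟨hσ, fun i j hij _ => ?_⟩
  obtain ⟨x, hxE, hx⟩ := hreg j
  rw [← hσ.subRank_eq_of_subset (Finset.subset_insert i _)]
  refine (subRank_insert_eq_iff σ _ _ j).2
    ⟨x, fun k hk => hxE k (mt mem_parents.2 hk), fun a ha => hx a ?_⟩
  rcases Finset.mem_insert.1 ha with rfl | ha
  · exact hij
  · exact hE a j (mem_parents.1 ha)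

theorem mem_locSet_iff (hE : ∀ i j, E i j → i < j) {σ : Matrix (Fin n) (Fin n) ℝ}
    (hσ : σ.PosSemidef) :
    σ ∈ locSet E ↔ ∃ Λ : Matrix (Fin n) (Fin n) ℝ,
      (∀ k j, ¬ E k j → Λ k j = 0) ∧ ∀ i j, i < j → (σ * Λ) i j = σ i j := by
  constructor
  · intro hloc
    choose x hxE hx using exists_regression_of_mem_locSet hloc
    exact ⟨of fun k j => x j k, fun k j => hxE j k, fun i j => hx j i⟩
  · rintro ⟨Λ, hΛE, hΛ⟩
    exact mem_locSet_of_regression hE hσ fun j => ⟨fun k => Λ k j, (hΛE · j), (hΛ · j)⟩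

end

open Filter Topology in
theorem locSet_subset_closure_posDef_general {n : ℕ}
    (E : Fin n → Fin n → Prop) [DecidableRel E] (hE : ∀ i j, E i j → i < j) :
    locSet E ⊆ closure (locSet E ∩ {σ | σ.PosDef}) := by
  intro σ hσ
  obtain ⟨Λ, hΛE, hσΛ⟩ := (mem_locSet_iff hE hσ.1).1 hσ
  obtain ⟨C, hC, hCΛ⟩ := exists_posDef_forall_lt_mul_apply_eq (Λ := Λ) fun i j hji =>
    hΛE i j fun h => (hE i j h).not_ge hji
  have hmem : ∀ ε : ℝ, 0 < ε → σ + ε • C ∈ locSet E ∩ {τ | τ.PosDef} := fun ε hε => by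
    have hpos : (σ + ε • C).PosDef := PosDef.posSemidef_add hσ.1 (hC.smul hε)
    refine ⟨(mem_locSet_iff hE hpos.posSemidef).2 ⟨Λ, hΛE, fun i j hij => ?_⟩, hpos⟩
    simp [add_mul, hσΛ i j hij, hCΛ i j hij]
  have hlim : Tendsto (fun ε : ℝ => σ + ε • C) (𝓝[>] 0) (𝓝 σ) := by
    have h := (tendsto_const_nhds (x := σ)).add ((tendsto_id (x := 𝓝 (0 : ℝ))).smul_const C)
    rw [zero_smul, add_zero] at h
    exact h.mono_left nhdsWithin_le_nhds
  exact mem_closure_of_tendsto hlim (eventually_nhdsWithin_of_forall hmem)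

/-- Proposition 3(a): `loc(G) ∩ Σ⁺⁺` is dense in `loc(G)`. -/
theorem locSet_subset_closure_posDef {n : ℕ} (hn : 1 ≤ n)
    (E : Fin n → Fin n → Prop) [DecidableRel E] (hE : ∀ i j, E i j → i < j) :
    locSet E ⊆ closure (locSet E ∩ {σ | σ.PosDef}) :=
  locSet_subset_closure_posDef_general E hE
end
end

section
/- Let G be a topologically sorted DAG on n nodes. Then there exists m₀ : ℕ such that for all m ≥ m₀ the colon ideal (I_G : θ₀^m) = {f ∈ R | θ₀^m * f ∈ I_G} equals the saturation p_G; in particular, for all sufficiently large m, (I_G : θ₀^m) is a prime ideal. -/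
/-!
Call an entry `s(i, j)` of the generic symmetric matrix free if it is diagonal or an edge
of `G`. Over the local ring `O`, at the identity matrix, of the polynomial ring in the free
entries, the generators `det M_{{i}∪pa(j),{j}∪pa(j)}` can be made to vanish by solving for the
non-free entries one at a time along the topological order: each generator is affine in
`s(i, j)` with leading coefficient the principal minor on `pa(j)`, which specializes to `1` at
the identity and so is a unit of `O`. The resulting `Φ : R → O` kills `I_G` and sends `θ₀` to a
unit, and `O` is a domain. Conversely, in `(R ⧸ I_G)[1/θ₀]` the same equations write
every variable as a fraction of free polynomials with unit denominator, and `Φ` is injective on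
free polynomials, so `ker Φ = p_G`; in particular `p_G` is prime. Finally `R` is Noetherian, so the
increasing chain `(I_G : θ₀^m)`, whose union is `p_G`, stabilizes.
-/

open MvPolynomial Matrix

noncomputable section

/-- The minor of `M` with rows `A` and columns `B`, each listed in increasing order. -/
def fminor {n : ℕ} {R : Type*} [CommRing R] (M : Matrix (Fin n) (Fin n) R)
    (A B : Finset (Fin n)) (h : B.card = A.card) : R :=
  Matrix.det (Matrix.of fun k l : Fin A.card =>
    M (A.orderEmbOfFin rfl k) (B.orderEmbOfFin h l))

/-- The generic symmetric matrix, with `(i,j)` entry the variable indexed by the unordered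
pair `s(i,j)`. -/
def genMat (n : ℕ) : Matrix (Fin n) (Fin n) (MvPolynomial (Sym2 (Fin n)) ℂ) :=
  fun i j => X (Sym2.mk i j)

/-- The ideal of imposed relations `I_G`, generated by the minors `det M_{{i}∪K,{j}∪K}` over all
pairs `i < j` with `¬ E i j`, where `K = pa(j)`. -/
def impIdeal {n : ℕ} (E : Fin n → Fin n → Prop) [DecidableRel E] :
    Ideal (MvPolynomial (Sym2 (Fin n)) ℂ) :=
  Ideal.span { f | ∃ i j : Fin n, ∃ _ : i < j, ∃ _ : ¬ E i j,
    ∃ h : (insert j (parents E j)).card = (insert i (parents E j)).card,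
      f = fminor (genMat n) (insert i (parents E j)) (insert j (parents E j)) h }

/-- The product `θ₀` of all principal minors of the generic symmetric matrix. -/
def theta0 (n : ℕ) : MvPolynomial (Sym2 (Fin n)) ℂ :=
  ∏ A : Finset (Fin n), fminor (genMat n) A A rfl

/-- The saturation `{f | ∃ m, g ^ m * f ∈ I}` of an ideal `I` at an element `g`. -/
def satIdeal {R : Type*} [CommRing R] (I : Ideal R) (g : R) : Ideal R where
  carrier := {f | ∃ m : ℕ, g ^ m * f ∈ I}
  zero_mem' := ⟨0, by simp⟩
  add_mem' := by
    rintro a b ⟨ma, ha⟩ ⟨mb, hb⟩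
    refine ⟨ma + mb, ?_⟩
    have h : g ^ (ma + mb) * (a + b) = g ^ mb * (g ^ ma * a) + g ^ ma * (g ^ mb * b) := by
      ring
    rw [h]
    exact I.add_mem (I.mul_mem_left _ ha) (I.mul_mem_left _ hb)
  smul_mem' := by
    rintro c a ⟨m, hm⟩
    refine ⟨m, ?_⟩
    have h : g ^ m * (c • a) = c * (g ^ m * a) := by
      simp only [smul_eq_mul]; ring
    rw [h]
    exact I.mul_mem_left _ hm


/-- The saturation `p_G` of `I_G` at `θ₀`. -/
def satPG {n : ℕ} (E : Fin n → Fin n → Prop) [DecidableRel E] :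
    Ideal (MvPolynomial (Sym2 (Fin n)) ℂ) :=
  satIdeal (impIdeal E) (theta0 n)

section Saturation

variable {R : Type*} [CommRing R]

theorem mem_colon_span_pow_iff {I : Ideal R} {g x : R} {m : ℕ} :
    x ∈ I.colon (Ideal.span {g ^ m}) ↔ g ^ m * x ∈ I := by
  rw [Ideal.span, Submodule.mem_colon_span_singleton, smul_eq_mul, mul_comm]

theorem exists_colon_pow_eq_satIdeal [IsNoetherianRing R] (I : Ideal R) (g : R) :
    ∃ m₀ : ℕ, ∀ m, m₀ ≤ m → I.colon (Ideal.span {g ^ m}) = satIdeal I g := by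
  let colons : ℕ →o Ideal R :=
    ⟨fun m => I.colon (Ideal.span {g ^ m}), monotone_nat_of_le_succ fun m x hx => by
      rw [mem_colon_span_pow_iff, pow_succ', mul_assoc] at *
      exact I.mul_mem_left g hx⟩
  obtain ⟨m₀, hm₀⟩ := monotone_stabilizes_iff_noetherian.mpr inferInstance colons
  refine ⟨m₀, fun m hm => le_antisymm (fun x hx => ⟨m, mem_colon_span_pow_iff.mp hx⟩) ?_⟩
  rintro x ⟨k, hk⟩
  have hx : x ∈ colons (max m₀ k) :=
    colons.monotone (le_max_right m₀ k) (mem_colon_span_pow_iff.mpr hk)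
  rwa [← hm₀ _ (le_max_left m₀ k), hm₀ m hm] at hx

def quotientAwayMap (I : Ideal R) (g : R) : R →+* Localization.Away (Ideal.Quotient.mk I g) :=
  (algebraMap (R ⧸ I) _).comp (Ideal.Quotient.mk I)

theorem ker_quotientAwayMap (I : Ideal R) (g : R) :
    RingHom.ker (quotientAwayMap I g) = satIdeal I g := by
  ext f
  simp only [RingHom.mem_ker, quotientAwayMap, RingHom.comp_apply, IsLocalization.map_eq_zero_iff
    (Submonoid.powers (Ideal.Quotient.mk I g)), Subtype.exists, Submonoid.mem_powers_iff]
  constructor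
  · rintro ⟨_, ⟨m, rfl⟩, h⟩
    exact ⟨m, Ideal.Quotient.eq_zero_iff_mem.mp (by rwa [map_mul, map_pow])⟩
  · rintro ⟨m, h⟩
    refine ⟨_, ⟨m, rfl⟩, ?_⟩
    rw [← map_pow, ← map_mul]
    exact Ideal.Quotient.eq_zero_iff_mem.mpr h

theorem quotientAwayMap_eq_zero_of_mem {I : Ideal R} {g f : R} (hf : f ∈ I) :
    quotientAwayMap I g f = 0 := by
  rw [quotientAwayMap, RingHom.comp_apply, Ideal.Quotient.eq_zero_iff_mem.mpr hf, map_zero]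

theorem isUnit_quotientAwayMap_of_dvd (I : Ideal R) {g a : R} (h : a ∣ g) :
    IsUnit (quotientAwayMap I g a) :=
  isUnit_of_dvd_unit (map_dvd _ h) (IsLocalization.Away.algebraMap_isUnit (Ideal.Quotient.mk I g))

end Saturation

section FracRange

variable {S L : Type*} [CommRing S] [CommRing L] (f : S →+* L)

def fracRange : Subring L :=
  (IsLocalization.lift (M := (IsUnit.submonoid L).comap f)
    (S := Localization ((IsUnit.submonoid L).comap f)) fun b => b.2).range

theorem mem_fracRange_iff {x : L} :
    x ∈ fracRange f ↔ ∃ a b, IsUnit (f b) ∧ f b * x = f a := by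
  constructor
  · rintro ⟨y, rfl⟩
    obtain ⟨⟨a, b⟩, rfl⟩ := IsLocalization.mk'_surjective ((IsUnit.submonoid L).comap f) y
    exact ⟨a, b, b.2, ((IsLocalization.lift_mk'_spec _ _ _ _).mp rfl).symm⟩
  · rintro ⟨a, b, hb, h⟩
    exact ⟨IsLocalization.mk' _ a (⟨b, hb⟩ : (IsUnit.submonoid L).comap f),
      (IsLocalization.lift_mk'_spec _ _ _ _).mpr h.symm⟩

theorem map_mem_fracRange (a : S) : f a ∈ fracRange f :=
  (mem_fracRange_iff f).mpr ⟨a, 1, by simp, by simp⟩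

theorem mem_fracRange_of_mul_eq {x u w : L} (hu : u ∈ fracRange f) (hu' : IsUnit u)
    (hw : w ∈ fracRange f) (h : x * u = w) : x ∈ fracRange f := by
  obtain ⟨a, b, hb, hab⟩ := (mem_fracRange_iff f).mp hu
  obtain ⟨a', b', hb', hab'⟩ := (mem_fracRange_iff f).mp hw
  refine (mem_fracRange_iff f).mpr ⟨b * a', a * b', ?_, ?_⟩
  · rw [map_mul, ← hab]
    exact (hb.mul hu').mul hb'
  · rw [map_mul, map_mul, ← hab, ← hab', ← h]
    ring

end FracRange

section LocalResidue

variable {A K : Type*} [CommRing A] [Field K] (f : A →+* K)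

instance : (RingHom.ker f).IsPrime := RingHom.ker_isPrime f

def localResidue : Localization.AtPrime (RingHom.ker f) →+* K :=
  IsLocalization.lift (M := (RingHom.ker f).primeCompl) fun b =>
    isUnit_iff_ne_zero.mpr fun hb => b.2 (RingHom.mem_ker.mpr hb)

theorem localResidue_algebraMap (a : A) :
    localResidue f (algebraMap A (Localization.AtPrime (RingHom.ker f)) a) = f a :=
  IsLocalization.lift_eq _ a

theorem isUnit_of_localResidue_ne_zero {x : Localization.AtPrime (RingHom.ker f)}
    (hx : localResidue f x ≠ 0) : IsUnit x := by
  by_contra hu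
  have hmax : x ∈ Ideal.map (algebraMap A _) (RingHom.ker f) := by
    rw [IsLocalization.AtPrime.map_eq_maximalIdeal]
    exact hu
  refine hx (RingHom.mem_ker.mp (Ideal.map_le_iff_le_comap.mpr (fun a ha => ?_) hmax))
  rw [Ideal.mem_comap, RingHom.mem_ker, localResidue_algebraMap]
  exact ha

end LocalResidue

theorem satIdeal_eq_ker_of_forall_mem_fracRange {R S O : Type*} [CommRing R] [CommRing S]
    [CommRing O] {I : Ideal R} {g : R} (Φ : R →+* O) (hI : I ≤ RingHom.ker Φ)
    (hg : IsUnit (Φ g)) (ι : S →+* R) (hι : Function.Injective (Φ.comp ι))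
    (hfrac : ∀ f, quotientAwayMap I g f ∈ fracRange ((quotientAwayMap I g).comp ι)) :
    satIdeal I g = RingHom.ker Φ := by
  apply le_antisymm
  · rintro f ⟨m, hm⟩
    have := RingHom.mem_ker.mp (hI hm)
    rw [map_mul, map_pow] at this
    exact (hg.pow m).mul_right_eq_zero.mp this
  intro f hf
  have hI' : ∀ a ∈ I, Φ a = 0 := fun a ha => hI ha
  let ψ := IsLocalization.Away.lift (S := Localization.Away (Ideal.Quotient.mk I g))
    (Ideal.Quotient.mk I g) (g := Ideal.Quotient.lift I Φ hI') (by rwa [Ideal.Quotient.lift_mk])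
  have hψ (x : R) : ψ (quotientAwayMap I g x) = Φ x := by
    simp only [ψ, quotientAwayMap, RingHom.comp_apply, IsLocalization.Away.lift_eq,
      Ideal.Quotient.lift_mk]
  obtain ⟨a, b, hb, hab⟩ := (mem_fracRange_iff _).mp (hfrac f)
  have ha : a = 0 := hι <| by
    have := congrArg ψ hab
    simp only [RingHom.comp_apply, map_mul, hψ, RingHom.mem_ker.mp hf, mul_zero] at this
    rw [RingHom.comp_apply, ← this, map_zero]
  rw [ha, map_zero] at hab
  rw [← ker_quotientAwayMap, RingHom.mem_ker]
  exact hb.mul_right_eq_zero.mp hab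

namespace Matrix

variable {α : Type*} [CommRing α]

def cornerZero {k : ℕ} (M : Matrix (Fin (k + 1)) (Fin (k + 1)) α) :
    Matrix (Fin (k + 1)) (Fin (k + 1)) α :=
  of fun x y => if x = Fin.last k ∧ y = Fin.last k then 0 else M x y

theorem det_eq_mul_det_add_det_cornerZero {k : ℕ} (M : Matrix (Fin (k + 1)) (Fin (k + 1)) α) :
    M.det = M (Fin.last k) (Fin.last k) * (M.submatrix Fin.castSucc Fin.castSucc).det
      + M.cornerZero.det := by
  rw [det_succ_row M (Fin.last k), det_succ_row M.cornerZero (Fin.last k),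
    Fin.sum_univ_castSucc, Fin.sum_univ_castSucc]
  have hminor (y : Fin k) : M.cornerZero.submatrix Fin.castSucc y.castSucc.succAbove
      = M.submatrix Fin.castSucc y.castSucc.succAbove := by
    ext a b
    simp [cornerZero, (Fin.castSucc_lt_last a).ne]
  have hrow (y : Fin k) : M.cornerZero (Fin.last k) y.castSucc = M (Fin.last k) y.castSucc := by
    simp [cornerZero, (Fin.castSucc_lt_last y).ne]
  have hcorner : M.cornerZero (Fin.last k) (Fin.last k) = 0 := by simp [cornerZero]
  simp only [Fin.succAbove_last, hminor, hrow, hcorner, ← two_mul, pow_mul, neg_one_sq, one_pow]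
  ring

theorem det_mem_subring (D : Subring α) {ι : Type*} [Fintype ι] [DecidableEq ι]
    {M : Matrix ι ι α} (h : ∀ x y, M x y ∈ D) : M.det ∈ D := by
  convert SetLike.coe_mem (of fun x y => (⟨M x y, h x y⟩ : D)).det
  rw [← Subring.coe_subtype, RingHom.map_det]
  rfl

theorem associated_det_submatrix {ι κ κ' : Type*} [Fintype κ] [DecidableEq κ] [Fintype κ']
    [DecidableEq κ'] (M : Matrix ι ι α) {r c : κ → ι} {r' c' : κ' → ι}
    (hr : r.Injective) (hc : c.Injective) (hr' : r'.Injective) (hc' : c'.Injective)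
    (hrr : Set.range r = Set.range r') (hcc : Set.range c = Set.range c') :
    Associated (M.submatrix r c).det (M.submatrix r' c').det := by
  let σ : κ' ≃ κ :=
    (Equiv.ofInjective r' hr').trans ((Equiv.setCongr hrr).symm.trans (Equiv.ofInjective r hr).symm)
  let τ : κ' ≃ κ :=
    (Equiv.ofInjective c' hc').trans ((Equiv.setCongr hcc).symm.trans (Equiv.ofInjective c hc).symm)
  have hσ (x : κ') : r (σ x) = r' x := by simp [σ, Equiv.apply_ofInjective_symm]
  have hτ (x : κ') : c (τ x) = c' x := by simp [τ, Equiv.apply_ofInjective_symm]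
  have hM : M.submatrix r' c'
      = ((M.submatrix r c).submatrix id (σ.symm.trans τ)).submatrix σ σ := by
    ext x y
    simp [hσ, hτ]
  refine ⟨(Equiv.Perm.sign (σ.symm.trans τ)).map (Int.castRingHom α), ?_⟩
  rw [hM, det_submatrix_equiv_self, det_permute']
  simp only [Units.coe_map, MonoidHom.coe_coe, eq_intCast]
  ring

end Matrix

section Minors

variable {n : ℕ} {α β : Type*} [CommRing α] [CommRing β]

theorem map_fminor (f : α →+* β) (M : Matrix (Fin n) (Fin n) α) (A B : Finset (Fin n))
    (h : B.card = A.card) : f (fminor M A B h) = fminor (M.map f) A B h := by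
  rw [fminor, RingHom.map_det]
  rfl

theorem fminor_one (A : Finset (Fin n)) : fminor (1 : Matrix (Fin n) (Fin n) α) A A rfl = 1 :=
  (congrArg det (submatrix_one_embedding (A.orderEmbOfFin rfl).toEmbedding)).trans det_one

end Minors

section SymMatrix

variable {n : ℕ} {α : Type*}

def symMatrix (g : Sym2 (Fin n) → α) : Matrix (Fin n) (Fin n) α :=
  of fun a b => g s(a, b)

@[simp]
theorem symMatrix_apply (g : Sym2 (Fin n) → α) (a b : Fin n) : symMatrix g a b = g s(a, b) :=
  rfl

theorem one_eq_symMatrix [Zero α] [One α] :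
    (1 : Matrix (Fin n) (Fin n) α) = symMatrix fun v => if v.IsDiag then 1 else 0 := by
  ext a b
  simp [one_apply, Sym2.mk_isDiag_iff]

end SymMatrix

theorem Sym2.inf_lt_sup_of_not_isDiag {β : Type*} [LinearOrder β] {v : Sym2 β}
    (hv : ¬ v.IsDiag) : v.inf < v.sup := by
  induction v using Sym2.ind with
  | _ a b =>
    rw [Sym2.mk_isDiag_iff] at hv
    simpa [Sym2.inf_mk, Sym2.sup_mk, eq_comm] using hv

section Entries

variable {n : ℕ} (E : Fin n → Fin n → Prop)

/-- The entries of `M` that `I_G` leaves unconstrained: the diagonal and the edges of `G`. -/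
def IsFreeEntry (v : Sym2 (Fin n)) : Prop :=
  v.IsDiag ∨ ∃ i j, E i j ∧ v = s(i, j)

theorem not_isFreeEntry (hE : ∀ i j, E i j → i < j) {i j : Fin n} (hij : i < j)
    (hnE : ¬ E i j) : ¬ IsFreeEntry E s(i, j) := by
  rintro (hd | ⟨a, b, hab, heq⟩)
  · exact hij.ne (Sym2.mk_isDiag_iff.mp hd)
  · rcases Sym2.eq_iff.mp heq with ⟨rfl, rfl⟩ | ⟨rfl, rfl⟩
    · exact hnE hab
    · exact (hE _ _ hab).not_gt hij

theorem entry_induction {P : Sym2 (Fin n) → Prop} (free : ∀ v, IsFreeEntry E v → P v)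
    (box : ∀ i j, i < j → ¬ E i j → (∀ a b, a < j → b < j → P s(a, b)) → P s(i, j))
    (v : Sym2 (Fin n)) : P v := by
  suffices h : ∀ j a b : Fin n, a ≤ j → b ≤ j → P s(a, b) by
    induction v using Sym2.ind with
    | _ a b => exact h (max a b) a b (le_max_left a b) (le_max_right a b)
  intro j
  induction j using WellFoundedLT.induction with
  | _ j ih =>
  have below (a b : Fin n) (ha : a < j) (hb : b < j) : P s(a, b) :=
    ih (max a b) (max_lt ha hb) a b (le_max_left a b) (le_max_right a b)
  have top (a : Fin n) (ha : a ≤ j) : P s(a, j) := by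
    rcases ha.lt_or_eq with ha | rfl
    · by_cases hE : E a j
      · exact free _ (Or.inr ⟨a, j, hE, rfl⟩)
      · exact box a j ha hE below
    · exact free _ (Or.inl (Sym2.mk_isDiag_iff.mpr rfl))
  intro a b ha hb
  rcases hb.lt_or_eq with hb | rfl
  · rcases ha.lt_or_eq with ha | rfl
    · exact below a b ha hb
    · exact Sym2.eq_swap ▸ top b hb.le
  · exact top a ha

variable [DecidableRel E]

instance : DecidablePred (IsFreeEntry E) := fun _ => by unfold IsFreeEntry; infer_instance

def parentEnum (j : Fin n) : Fin (parents E j).card → Fin n :=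
  (parents E j).orderEmbOfFin rfl

theorem parentEnum_edge (j : Fin n) (x : Fin (parents E j).card) : E (parentEnum E j x) j :=
  (Finset.mem_filter.mp ((parents E j).orderEmbOfFin_mem rfl x)).2

theorem parentEnum_lt (hE : ∀ i j, E i j → i < j) (j : Fin n) (x : Fin (parents E j).card) :
    parentEnum E j x < j :=
  hE _ _ (parentEnum_edge E j x)

theorem parentEnum_injective (j : Fin n) : (parentEnum E j).Injective :=
  ((parents E j).orderEmbOfFin rfl).injective

theorem range_parentEnum (j : Fin n) : Set.range (parentEnum E j) = parents E j :=
  Finset.range_orderEmbOfFin _ rfl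

def boxIndex (j i : Fin n) : Fin ((parents E j).card + 1) → Fin n :=
  Fin.snoc (parentEnum E j) i

@[simp]
theorem boxIndex_castSucc (j i : Fin n) (x : Fin (parents E j).card) :
    boxIndex E j i x.castSucc = parentEnum E j x :=
  Fin.snoc_castSucc ..

@[simp]
theorem boxIndex_last (j i : Fin n) : boxIndex E j i (Fin.last _) = i :=
  Fin.snoc_last ..

theorem notMem_parents_self (hE : ∀ i j, E i j → i < j) (j : Fin n) : j ∉ parents E j :=
  fun h => (hE j j (Finset.mem_filter.mp h).2).false

end Entries

section BoxMinors

variable {n : ℕ} (E : Fin n → Fin n → Prop) [DecidableRel E] {α β : Type*} [CommRing α]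
  [CommRing β] (M : Matrix (Fin n) (Fin n) α)

def parentMinor (j : Fin n) : α := fminor M (parents E j) (parents E j) rfl

/-- Up to sign, its determinant is the generator of `I_G` at `i, j`; listing `i` and `j` last
puts `s(i, j)` in the corner. -/
def boxSubmatrix (i j : Fin n) :
    Matrix (Fin ((parents E j).card + 1)) (Fin ((parents E j).card + 1)) α :=
  M.submatrix (boxIndex E j i) (boxIndex E j j)

def cornerMinor (i j : Fin n) : α := (boxSubmatrix E M i j).cornerZero.det

theorem det_boxSubmatrix (i j : Fin n) :
    (boxSubmatrix E M i j).det = M i j * parentMinor E M j + cornerMinor E M i j := by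
  have hsub : (boxSubmatrix E M i j).submatrix Fin.castSucc Fin.castSucc
      = M.submatrix (parentEnum E j) (parentEnum E j) := by
    ext x y
    simp [boxSubmatrix]
  rw [det_eq_mul_det_add_det_cornerZero, hsub]
  simp only [boxSubmatrix, submatrix_apply, boxIndex_last]
  rfl

theorem associated_fminor_det_boxSubmatrix (hE : ∀ i j, E i j → i < j) {i j : Fin n}
    (hnE : ¬ E i j) (h : (insert j (parents E j)).card = (insert i (parents E j)).card) :
    Associated (fminor M (insert i (parents E j)) (insert j (parents E j)) h)
      (boxSubmatrix E M i j).det := by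
  have hi : i ∉ Set.range (parentEnum E j) := by
    rw [range_parentEnum, Finset.mem_coe, parents, Finset.mem_filter]
    exact fun h => hnE h.2
  have hj : j ∉ Set.range (parentEnum E j) := by
    rw [range_parentEnum, Finset.mem_coe]
    exact notMem_parents_self E hE j
  apply associated_det_submatrix M (Finset.orderEmbOfFin _ rfl).injective
    (Finset.orderEmbOfFin _ h).injective
    (Fin.snoc_injective_iff.mpr ⟨parentEnum_injective E j, hi⟩ : (boxIndex E j i).Injective)
    (Fin.snoc_injective_iff.mpr ⟨parentEnum_injective E j, hj⟩ : (boxIndex E j j).Injective)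
  all_goals simp [Finset.range_orderEmbOfFin, Fin.range_snoc, range_parentEnum]

theorem boxSubmatrix_index_cases (hE : ∀ i j, E i j → i < j) {i j : Fin n} (hij : i < j)
    {x y : Fin ((parents E j).card + 1)} (hxy : ¬ (x = Fin.last _ ∧ y = Fin.last _)) :
    (boxIndex E j i x < j ∧ boxIndex E j j y < j) ∨
      (E (boxIndex E j i x) j ∧ boxIndex E j j y = j) := by
  rcases Fin.eq_castSucc_or_eq_last x with ⟨x, rfl⟩ | rfl <;>
    rcases Fin.eq_castSucc_or_eq_last y with ⟨y, rfl⟩ | rfl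
  · simp [parentEnum_lt E hE]
  · simp [parentEnum_edge]
  · simp [parentEnum_lt E hE, hij]
  · exact absurd ⟨rfl, rfl⟩ hxy

theorem cornerMinor_congr (hE : ∀ i j, E i j → i < j) {M' : Matrix (Fin n) (Fin n) α}
    {i j : Fin n} (hij : i < j) (hlt : ∀ a b, a < j → b < j → M a b = M' a b)
    (hedge : ∀ a, E a j → M a j = M' a j) : cornerMinor E M i j = cornerMinor E M' i j := by
  unfold cornerMinor
  congr 1
  ext x y
  simp only [cornerZero, boxSubmatrix, of_apply, submatrix_apply]
  split_ifs with hxy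
  · rfl
  rcases boxSubmatrix_index_cases E hE hij hxy with ⟨ha, hb⟩ | ⟨ha, hb⟩
  · exact hlt _ _ ha hb
  · rw [hb]
    exact hedge _ ha

theorem cornerMinor_mem (D : Subring α) (hE : ∀ i j, E i j → i < j) {i j : Fin n} (hij : i < j)
    (hlt : ∀ a b, a < j → b < j → M a b ∈ D) (hedge : ∀ a, E a j → M a j ∈ D) :
    cornerMinor E M i j ∈ D := by
  refine det_mem_subring D fun x y => ?_
  simp only [cornerZero, boxSubmatrix, of_apply, submatrix_apply]
  split_ifs with hxy
  · exact D.zero_mem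
  rcases boxSubmatrix_index_cases E hE hij hxy with ⟨ha, hb⟩ | ⟨ha, hb⟩
  · exact hlt _ _ ha hb
  · rw [hb]
    exact hedge _ ha

theorem parentMinor_congr (hE : ∀ i j, E i j → i < j) {M' : Matrix (Fin n) (Fin n) α}
    {j : Fin n} (hlt : ∀ a b, a < j → b < j → M a b = M' a b) :
    parentMinor E M j = parentMinor E M' j := by
  unfold parentMinor fminor
  congr 1
  ext x y
  exact hlt _ _ (parentEnum_lt E hE j x) (parentEnum_lt E hE j y)

theorem parentMinor_mem (D : Subring α) (hE : ∀ i j, E i j → i < j) {j : Fin n}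
    (hlt : ∀ a b, a < j → b < j → M a b ∈ D) : parentMinor E M j ∈ D :=
  det_mem_subring D fun x y => hlt _ _ (parentEnum_lt E hE j x) (parentEnum_lt E hE j y)

theorem cornerMinor_one (hE : ∀ i j, E i j → i < j) (i j : Fin n) :
    cornerMinor E (1 : Matrix (Fin n) (Fin n) α) i j = 0 := by
  refine det_eq_zero_of_column_eq_zero (Fin.last _) fun x => ?_
  rcases Fin.eq_castSucc_or_eq_last x with ⟨x, rfl⟩ | rfl
  · simp [cornerZero, boxSubmatrix, (parentEnum_lt E hE j x).ne, (Fin.castSucc_lt_last x).ne]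
  · simp [cornerZero]

theorem map_det_boxSubmatrix (f : α →+* β) (i j : Fin n) :
    f (boxSubmatrix E M i j).det = (boxSubmatrix E (M.map f) i j).det :=
  RingHom.map_det f _

theorem map_cornerMinor (f : α →+* β) (i j : Fin n) :
    f (cornerMinor E M i j) = cornerMinor E (M.map f) i j := by
  rw [cornerMinor, RingHom.map_det, cornerMinor]
  congr 1
  ext x y
  simp only [RingHom.mapMatrix_apply, map_apply, cornerZero, of_apply]
  split_ifs <;> simp [boxSubmatrix]

end BoxMinors

section Completion

variable {n : ℕ} (E : Fin n → Fin n → Prop) [DecidableRel E] {α : Type*} [CommRing α]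

variable (x : Sym2 (Fin n) → α)

/-- Solves `det (boxSubmatrix E M i j) = M i j * parentMinor E M j + cornerMinor E M i j = 0`
for the non-free entry `s(i, j)`, reading the other entries of `M` from `g`. -/
def completionStep (g : Sym2 (Fin n) → α) (v : Sym2 (Fin n)) : α :=
  if IsFreeEntry E v then x v
  else -Ring.inverse (parentMinor E (symMatrix g) v.sup) * cornerMinor E (symMatrix g) v.inf v.sup

/-- Each round of `completionStep` fixes the entries below one more node. -/
def completion : Sym2 (Fin n) → α :=
  (completionStep E x)^[n + 1] 0

theorem completionStep_congr (hE : ∀ i j, E i j → i < j) {g g' : Sym2 (Fin n) → α} {t : ℕ}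
    (h : ∀ v, IsFreeEntry E v ∨ (v.sup : ℕ) < t → g v = g' v) (v : Sym2 (Fin n))
    (hv : IsFreeEntry E v ∨ (v.sup : ℕ) < t + 1) :
    completionStep E x g v = completionStep E x g' v := by
  unfold completionStep
  split_ifs with hfree
  · rfl
  replace hv : (v.sup : ℕ) ≤ t := Nat.lt_succ_iff.mp (hv.resolve_left hfree)
  have hlt (a b : Fin n) (ha : a < v.sup) (hb : b < v.sup) : symMatrix g a b = symMatrix g' a b :=
    h _ (Or.inr (lt_of_lt_of_le (sup_lt_iff.mpr ⟨ha, hb⟩) hv))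
  have hedge (a : Fin n) (ha : E a v.sup) : symMatrix g a v.sup = symMatrix g' a v.sup :=
    h _ (Or.inl (Or.inr ⟨a, v.sup, ha, rfl⟩))
  have hinf : v.inf < v.sup := Sym2.inf_lt_sup_of_not_isDiag fun hd => hfree (Or.inl hd)
  rw [parentMinor_congr E _ hE hlt, cornerMinor_congr E _ hE hinf hlt hedge]

theorem completionStep_iterate_congr (hE : ∀ i j, E i j → i < j) (k : ℕ)
    (g g' : Sym2 (Fin n) → α) (v : Sym2 (Fin n)) (hv : IsFreeEntry E v ∨ (v.sup : ℕ) < k) :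
    (completionStep E x)^[k + 1] g v = (completionStep E x)^[k + 1] g' v := by
  induction k generalizing v with
  | zero =>
    rcases hv with hfree | hlt
    · simp [completionStep, hfree]
    · omega
  | succ k ih =>
    rw [Function.iterate_succ_apply', Function.iterate_succ_apply' _ (k + 1)]
    exact completionStep_congr E x hE ih v hv

theorem completionStep_completion (hE : ∀ i j, E i j → i < j) :
    completionStep E x (completion E x) = completion E x := by
  funext v
  have := completionStep_iterate_congr E x hE n (completionStep E x 0) 0 v (Or.inr v.sup.2)
  rwa [← Function.iterate_succ_apply, Function.iterate_succ_apply'] at this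

theorem completion_of_isFreeEntry {v : Sym2 (Fin n)} (hv : IsFreeEntry E v) :
    completion E x v = x v := by
  rw [completion, Function.iterate_succ_apply', completionStep, if_pos hv]

theorem completion_mk (hE : ∀ i j, E i j → i < j) {i j : Fin n} (hij : i < j) (hnE : ¬ E i j) :
    completion E x s(i, j) = -Ring.inverse (parentMinor E (symMatrix (completion E x)) j)
      * cornerMinor E (symMatrix (completion E x)) i j := by
  conv_lhs => rw [← completionStep_completion E x hE]
  rw [completionStep, if_neg (not_isFreeEntry E hE hij hnE), Sym2.inf_mk, Sym2.sup_mk,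
    inf_eq_left.mpr hij.le, sup_eq_right.mpr hij.le]

theorem det_boxSubmatrix_completion (hE : ∀ i j, E i j → i < j) {i j : Fin n} (hij : i < j)
    (hnE : ¬ E i j) (hunit : IsUnit (parentMinor E (symMatrix (completion E x)) j)) :
    (boxSubmatrix E (symMatrix (completion E x)) i j).det = 0 := by
  rw [det_boxSubmatrix, symMatrix_apply, completion_mk E x hE hij hnE]
  linear_combination (-cornerMinor E (symMatrix (completion E x)) i j) *
    Ring.inverse_mul_cancel _ hunit

end Completion

section Parametrization

variable {n : ℕ} (E : Fin n → Fin n → Prop)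

abbrev FreeParamRing := MvPolynomial {v : Sym2 (Fin n) // IsFreeEntry E v} ℂ

def freeInclusion : FreeParamRing E →+* MvPolynomial (Sym2 (Fin n)) ℂ :=
  (rename Subtype.val).toRingHom

@[simp]
theorem freeInclusion_X (v : {v : Sym2 (Fin n) // IsFreeEntry E v}) :
    freeInclusion E (X v) = X v.1 :=
  rename_X _ _

@[simp]
theorem freeInclusion_C (a : ℂ) : freeInclusion E (C a) = C a :=
  rename_C _ _

def evalAtOne : FreeParamRing E →+* ℂ :=
  MvPolynomial.eval fun v => if v.1.IsDiag then 1 else 0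

/-- The local ring at the identity matrix: the principal minors of the parametrization
specialize to `1` there, hence are units. -/
abbrev ParamLocalRing := Localization.AtPrime (RingHom.ker (evalAtOne E))

variable [DecidableRel E]

def freeParam (v : Sym2 (Fin n)) : ParamLocalRing E :=
  if h : IsFreeEntry E v then algebraMap (FreeParamRing E) _ (X ⟨v, h⟩) else 0

/-- The generic point of `V(p_G)`, as a function of the free entries. -/
def paramEntry : Sym2 (Fin n) → ParamLocalRing E :=
  completion E (freeParam E)

def paramMap : MvPolynomial (Sym2 (Fin n)) ℂ →+* ParamLocalRing E :=
  (aeval (paramEntry E)).toRingHom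

theorem map_genMat_paramMap : (genMat n).map (paramMap E) = symMatrix (paramEntry E) := by
  ext a b
  simp [genMat, paramMap]

theorem paramEntry_of_isFreeEntry {v : Sym2 (Fin n)} (hv : IsFreeEntry E v) :
    paramEntry E v = algebraMap (FreeParamRing E) _ (X ⟨v, hv⟩) := by
  rw [paramEntry, completion_of_isFreeEntry E _ hv, freeParam, dif_pos hv]

theorem paramMap_freeInclusion (p : FreeParamRing E) :
    paramMap E (freeInclusion E p) = algebraMap _ (ParamLocalRing E) p := by
  have h : aeval (paramEntry E ∘ Subtype.val)
      = IsScalarTower.toAlgHom ℂ (FreeParamRing E) (ParamLocalRing E) :=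
    algHom_ext fun u => by simp [paramEntry_of_isFreeEntry E u.2]
  simp [paramMap, freeInclusion, aeval_rename, h]

theorem injective_paramMap_comp_freeInclusion :
    Function.Injective ((paramMap E).comp (freeInclusion E)) := by
  have h : ⇑((paramMap E).comp (freeInclusion E)) = algebraMap _ _ :=
    funext (paramMap_freeInclusion E)
  rw [h]
  exact IsLocalization.injective (ParamLocalRing E)
    (Ideal.primeCompl_le_nonZeroDivisors (RingHom.ker (evalAtOne E)))

theorem map_symMatrix_paramEntry_localResidue (hE : ∀ i j, E i j → i < j) :
    (symMatrix (paramEntry E)).map (localResidue (evalAtOne E)) = 1 := by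
  have hfree (v : Sym2 (Fin n)) (hv : IsFreeEntry E v) :
      localResidue (evalAtOne E) (paramEntry E v) = if v.IsDiag then 1 else 0 := by
    rw [paramEntry_of_isFreeEntry E hv, localResidue_algebraMap, evalAtOne, eval_X]
  have hentry : ∀ v, localResidue (evalAtOne E) (paramEntry E v) = if v.IsDiag then 1 else 0 := by
    refine entry_induction E hfree fun i j hij hnE ih => ?_
    have hcorner :
        localResidue (evalAtOne E) (cornerMinor E (symMatrix (paramEntry E)) i j) = 0 := by
      rw [map_cornerMinor, cornerMinor_congr E _ hE hij (M' := 1) (fun a b _ _ => ?_)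
        fun a ha => ?_, cornerMinor_one E hE]
      · rw [one_eq_symMatrix]
        exact ih a b ‹_› ‹_›
      · rw [one_eq_symMatrix]
        exact hfree _ (Or.inr ⟨a, j, ha, rfl⟩)
    have hmk : paramEntry E s(i, j) = -Ring.inverse (parentMinor E (symMatrix (paramEntry E)) j)
        * cornerMinor E (symMatrix (paramEntry E)) i j :=
      completion_mk E (freeParam E) hE hij hnE
    rw [hmk, map_mul, hcorner, mul_zero, if_neg (by simpa using hij.ne)]
  rw [one_eq_symMatrix]
  ext a b
  exact hentry s(a, b)

theorem isUnit_paramMap_fminor (hE : ∀ i j, E i j → i < j) (A : Finset (Fin n)) :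
    IsUnit (paramMap E (fminor (genMat n) A A rfl)) := by
  apply isUnit_of_localResidue_ne_zero (evalAtOne E)
  rw [map_fminor, map_genMat_paramMap, map_fminor, map_symMatrix_paramEntry_localResidue E hE,
    fminor_one]
  exact one_ne_zero

theorem isUnit_paramMap_theta0 (hE : ∀ i j, E i j → i < j) :
    IsUnit (paramMap E (theta0 n)) := by
  rw [theta0, map_prod]
  exact IsUnit.prod_univ_iff.mpr (isUnit_paramMap_fminor E hE)

theorem impIdeal_le_ker_paramMap (hE : ∀ i j, E i j → i < j) :
    impIdeal E ≤ RingHom.ker (paramMap E) := by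
  refine Ideal.span_le.mpr ?_
  rintro _ ⟨i, j, hij, hnE, h, rfl⟩
  have hunit := isUnit_paramMap_fminor E hE (parents E j)
  rw [map_fminor, map_genMat_paramMap] at hunit
  rw [SetLike.mem_coe, RingHom.mem_ker, map_fminor, map_genMat_paramMap,
    (associated_fminor_det_boxSubmatrix E _ hE hnE h).eq_zero_iff]
  exact det_boxSubmatrix_completion E (freeParam E) hE hij hnE hunit

end Parametrization

section Quotient

variable {n : ℕ} (E : Fin n → Fin n → Prop) [DecidableRel E]

theorem quotientAwayMap_X_mem_fracRange (hE : ∀ i j, E i j → i < j) (v : Sym2 (Fin n)) :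
    quotientAwayMap (impIdeal E) (theta0 n) (X v) ∈
      fracRange ((quotientAwayMap (impIdeal E) (theta0 n)).comp (freeInclusion E)) := by
  let q := quotientAwayMap (impIdeal E) (theta0 n)
  let D := fracRange (q.comp (freeInclusion E))
  have hfree (v : Sym2 (Fin n)) (hv : IsFreeEntry E v) : q (X v) ∈ D := by
    simpa using map_mem_fracRange (q.comp (freeInclusion E)) (X ⟨v, hv⟩)
  refine entry_induction E hfree (fun i j hij hnE ih => ?_) v
  let M := (genMat n).map q
  have hcard : (insert j (parents E j)).card = (insert i (parents E j)).card := by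
    rw [Finset.card_insert_of_notMem (notMem_parents_self E hE j),
      Finset.card_insert_of_notMem (by simpa [parents] using hnE)]
  have hbox : (boxSubmatrix E M i j).det = 0 := by
    rw [← map_det_boxSubmatrix, ← ((associated_fminor_det_boxSubmatrix E _ hE hnE hcard).map
      q).eq_zero_iff]
    exact quotientAwayMap_eq_zero_of_mem (Ideal.subset_span ⟨i, j, hij, hnE, hcard, rfl⟩)
  have hunit : IsUnit (parentMinor E M j) := by
    rw [parentMinor, ← map_fminor]
    exact isUnit_quotientAwayMap_of_dvd _ (Finset.dvd_prod_of_mem _ (Finset.mem_univ _))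
  rw [det_boxSubmatrix] at hbox
  exact mem_fracRange_of_mul_eq _ (parentMinor_mem E M D hE ih) hunit
    (D.neg_mem (cornerMinor_mem E M D hE hij ih fun a ha => hfree _ (Or.inr ⟨a, j, ha, rfl⟩)))
    (eq_neg_of_add_eq_zero_left hbox)

theorem quotientAwayMap_mem_fracRange (hE : ∀ i j, E i j → i < j)
    (f : MvPolynomial (Sym2 (Fin n)) ℂ) :
    quotientAwayMap (impIdeal E) (theta0 n) f ∈
      fracRange ((quotientAwayMap (impIdeal E) (theta0 n)).comp (freeInclusion E)) := by
  induction f using MvPolynomial.induction_on with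
  | C a =>
    simpa using map_mem_fracRange ((quotientAwayMap (impIdeal E) (theta0 n)).comp
      (freeInclusion E)) (C a)
  | add p q hp hq =>
    rw [map_add]
    exact add_mem hp hq
  | mul_X p v hp =>
    rw [map_mul]
    exact mul_mem hp (quotientAwayMap_X_mem_fracRange E hE v)

end Quotient

theorem colon_eq_satPG_of_large_general {n : ℕ}
    (E : Fin n → Fin n → Prop) [DecidableRel E] (hE : ∀ i j, E i j → i < j) :
    ∃ m₀ : ℕ, ∀ m : ℕ, m₀ ≤ m →
      Submodule.colon (impIdeal E) (Ideal.span {theta0 n ^ m}) = satPG E ∧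
      (Submodule.colon (impIdeal E) (Ideal.span {theta0 n ^ m})).IsPrime := by
  have hker : satPG E = RingHom.ker (paramMap E) :=
    satIdeal_eq_ker_of_forall_mem_fracRange (paramMap E) (impIdeal_le_ker_paramMap E hE)
      (isUnit_paramMap_theta0 E hE) _ (injective_paramMap_comp_freeInclusion E)
      (quotientAwayMap_mem_fracRange E hE)
  obtain ⟨m₀, hm₀⟩ := exists_colon_pow_eq_satIdeal (impIdeal E) (theta0 n)
  refine ⟨m₀, fun m hm => ⟨hm₀ m hm, ?_⟩⟩
  rw [hm₀ m hm, ← satPG, hker]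
  exact RingHom.ker_isPrime _

/-- Sullivant's Conjecture 3.3 as proved in the paper: for all sufficiently large `m`, the colon
ideal `(I_G : θ₀^m)` equals the saturation `p_G`; in particular it is prime. -/
theorem colon_eq_satPG_of_large {n : ℕ} (hn : 1 ≤ n)
    (E : Fin n → Fin n → Prop) [DecidableRel E] (hE : ∀ i j, E i j → i < j) :
    ∃ m₀ : ℕ, ∀ m : ℕ, m₀ ≤ m →
      Submodule.colon (impIdeal E) (Ideal.span {theta0 n ^ m}) = satPG E ∧
      (Submodule.colon (impIdeal E) (Ideal.span {theta0 n ^ m})).IsPrime :=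
  colon_eq_satPG_of_large_general E hE
end
end

section
/- There exist a sequence (σₖ) of real symmetric positive definite 4 × 4 matrices and a real symmetric positive semidefinite 4 × 4 matrix σ such that σₖ converges to σ entrywise, for every k the 3 × 3 minor of σₖ with rows (0,1,3) and columns (2,1,3) equals 0 (so, σₖ being positive definite, the Gaussian with covariance σₖ satisfies X₀ ⫫ X₂ | (X₁,X₃)), yet the rank of the submatrix of σ with rows (0,1,3) and columns (2,1,3) differs from the rank of the submatrix of σ with rows (1,3) and columns (1,3) (so the Gaussian limit does not satisfy X₀ ⫫ X₂ | (X₁,X₃)). Consequently, the set of positive semidefinite matrices satisfying the Gaussian conditional-independence rank condition is not closed. -/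
/-!
The path `t ↦ ciCovariance t` has quadratic form
`((1 - t)(x₀ + x₂) + t x₁)² + t(2 - t)(x₀² + x₂²) + t² x₃²`, so it is positive definite for
`0 < t < 2` and positive semidefinite at `t = 0`. In the rows `(0,1,3)` and columns `(2,1,3)` its
upper `2 × 2` block `[(1-t)², t(1-t); t(1-t), t²]` has rank one and the last row and column
vanish off the diagonal, so that minor is `0` for every `t`. At `t = 0`, however, the
conditioning block `σ_{(1,3),(1,3)} = diag(t², t²)` degenerates to `0` while `σ₀₂ = 1` survives,
so the rank condition fails in the limit.
-/

open Matrix Filter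

theorem rank_diagonal_ne_zero {m K : Type*} [Fintype m] [DecidableEq m] [Field K] {w : m → K}
    {i : m} (hi : w i ≠ 0) : (diagonal w).rank ≠ 0 := by
  classical
  rw [rank_diagonal]
  exact (Fintype.card_pos_iff.2 ⟨⟨i, hi⟩⟩).ne'

noncomputable def ciCovariance (t : ℝ) : Matrix (Fin 4) (Fin 4) ℝ :=
  !![1, t * (1 - t), (1 - t) ^ 2, 0;
     t * (1 - t), t ^ 2, t * (1 - t), 0;
     (1 - t) ^ 2, t * (1 - t), 1, 0;
     0, 0, 0, t ^ 2]

theorem continuous_ciCovariance : Continuous ciCovariance := by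
  refine continuous_matrix fun i j => ?_
  fin_cases i <;> fin_cases j <;> simp [ciCovariance] <;> fun_prop

theorem ciCovariance_isHermitian (t : ℝ) : (ciCovariance t).IsHermitian := by
  ext i j
  fin_cases i <;> fin_cases j <;> simp [ciCovariance]

theorem dotProduct_ciCovariance_mulVec (t : ℝ) (x : Fin 4 → ℝ) :
    star x ⬝ᵥ (ciCovariance t *ᵥ x) =
      ((1 - t) * (x 0 + x 2) + t * x 1) ^ 2 + t * (2 - t) * (x 0 ^ 2 + x 2 ^ 2)
        + t ^ 2 * x 3 ^ 2 := by
  simp [ciCovariance, dotProduct, mulVec, Fin.sum_univ_four]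
  ring

theorem ciCovariance_posSemidef {t : ℝ} (h0 : 0 ≤ t) (h2 : t ≤ 2) :
    (ciCovariance t).PosSemidef := by
  refine posSemidef_iff_dotProduct_mulVec.2 ⟨ciCovariance_isHermitian t, fun x => ?_⟩
  rw [dotProduct_ciCovariance_mulVec]
  have : 0 ≤ t * (2 - t) := mul_nonneg h0 (by linarith)
  positivity

theorem ciCovariance_posDef {t : ℝ} (h0 : 0 < t) (h2 : t < 2) : (ciCovariance t).PosDef := by
  refine posDef_iff_dotProduct_mulVec.2 ⟨ciCovariance_isHermitian t, fun x hx => ?_⟩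
  rw [dotProduct_ciCovariance_mulVec]
  have hs : 0 < t * (2 - t) := mul_pos h0 (by linarith)
  by_contra! hQ
  obtain ⟨hx0, hx2, hx3⟩ : x 0 = 0 ∧ x 2 = 0 ∧ x 3 = 0 := by
    refine ⟨?_, ?_, ?_⟩ <;>
      refine (pow_eq_zero_iff two_ne_zero).1 (le_antisymm ?_ (sq_nonneg _)) <;>
      nlinarith [sq_nonneg ((1 - t) * (x 0 + x 2) + t * x 1), sq_nonneg (x 0),
        sq_nonneg (x 2), sq_nonneg (x 3), mul_pos h0 h0]
  have hx1 : x 1 = 0 := by simpa [hx0, hx2, hx3, h0.ne'] using hQ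
  exact hx (funext fun i => by fin_cases i <;> simp_all)

theorem det_ciCovariance_submatrix (t : ℝ) :
    ((ciCovariance t).submatrix ![0, 1, 3] ![2, 1, 3]).det = 0 := by
  rw [det_fin_three]
  simp [ciCovariance]
  ring

theorem ciCovariance_zero_submatrix_conditioning :
    (ciCovariance 0).submatrix ![1, 3] ![1, 3] = 0 := by
  ext i j
  fin_cases i <;> fin_cases j <;> simp [ciCovariance]

theorem ciCovariance_zero_submatrix_ci :
    (ciCovariance 0).submatrix ![0, 1, 3] ![2, 1, 3] = diagonal ![1, 0, 0] := by
  ext i j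
  fin_cases i <;> fin_cases j <;> simp [ciCovariance]

/-- Example 1 of the paper: conditional independence is not preserved under weak limits of
Gaussians, so `loc(G)` is not closed. There is a sequence of positive definite covariance
matrices satisfying `X₀ ⫫ X₂ | (X₁, X₃)` (the minor with rows `(0,1,3)` and columns `(2,1,3)`
vanishes) converging to a positive semidefinite matrix violating the corresponding rank
condition. -/
theorem exists_posDef_seq_ci_limit_not_ci :
    ∃ (σseq : ℕ → Matrix (Fin 4) (Fin 4) ℝ) (σ : Matrix (Fin 4) (Fin 4) ℝ),
      (∀ k, (σseq k).PosDef) ∧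
      σ.PosSemidef ∧
      Tendsto σseq atTop (nhds σ) ∧
      (∀ k, ((σseq k).submatrix ![0, 1, 3] ![2, 1, 3]).det = 0) ∧
      (σ.submatrix ![0, 1, 3] ![2, 1, 3]).rank ≠ (σ.submatrix ![1, 3] ![1, 3]).rank := by
  refine ⟨fun k => ciCovariance (1 / (k + 1)), ciCovariance 0, fun k => ?_,
    ciCovariance_posSemidef le_rfl zero_le_two, ?_, fun k => det_ciCovariance_submatrix _, ?_⟩
  · have hk : (1 : ℝ) ≤ k + 1 := by linarith [k.cast_nonneg (α := ℝ)]
    exact ciCovariance_posDef (by positivity)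
      ((div_le_one_of_le₀ hk (by positivity)).trans_lt one_lt_two)
  · exact (continuous_ciCovariance.tendsto 0).comp tendsto_one_div_add_atTop_nhds_zero_nat
  · rw [ciCovariance_zero_submatrix_ci, ciCovariance_zero_submatrix_conditioning, rank_zero]
    exact rank_diagonal_ne_zero (i := 0) one_ne_zero
end
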